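/- For k > 0 and pointed Kripke structures (i.e., pointed σ-structures over a signature with symbols of arity ≤ 2), the k-step unravelling M_k is a comonad on the category of pointed σ-structures: M_k(A, a) has universe consisting of [a] together with all sequences [a_0, α_1, a_1, …, α_j, a_j] with a_0 = a, 1 ≤ j ≤ k, and R^A_{α_i}(a_i, a_{i+1}) for all i < j; distinguished element [a]; and R^{M_k(A,a)}_α(s,t) iff t = s[α, a'] for some a'. The counit sends a sequence to its last element; coextension is defined prefix-wise; these satisfy the comonad laws. -/

import Mathlib

/-- A Kripke structure over a signature with relation symbols of arity at most 2:
binary relations (transitions) indexed by labels in `Λ` and unary relations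
(propositions) indexed by `P`. -/
structure Kripke (Λ P : Type) where
  carrier : Type
  trans : Λ → carrier → carrier → Prop
  props : P → carrier → Prop

/-- `s` is a path in `M` starting from `a`: each step `(αᵢ, aᵢ)` of `s` is a
transition `R_{αᵢ}(a_{i-1}, aᵢ)` from the previous element (which is `a` at the
start). -/
def IsPath {Λ P : Type} (M : Kripke Λ P) (a : M.carrier) (s : List (Λ × M.carrier)) : Prop :=
  ∀ (i : ℕ) (h : i < s.length),
    M.trans (s.get ⟨i, h⟩).1 (((s.take i).getLast?).elim a Prod.snd) (s.get ⟨i, h⟩).2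

/-- The universe of the `k`-step unravelling of `(M, a)`: paths from `a` of length
≤ k (the empty path corresponds to `[a]`). -/
def MPath {Λ P : Type} (M : Kripke Λ P) (a : M.carrier) (k : ℕ) : Type :=
  { s : List (Λ × M.carrier) // s.length ≤ k ∧ IsPath M a s }

/-- The distinguished element `[a]` of the unravelling. -/
def nilPath {Λ P : Type} (M : Kripke Λ P) (a : M.carrier) (k : ℕ) : MPath M a k :=
  ⟨[], by simp, fun i h => absurd h (by simp)⟩

/-- The counit: the last element of a path (which is `a` for the empty path). -/
def lastM {Λ P : Type} {M : Kripke Λ P} {a : M.carrier} {k : ℕ} (s : MPath M a k) :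
    M.carrier :=
  (s.1.getLast?).elim a Prod.snd

/-- The `k`-step unravelling `M_k(A, a)` of a pointed Kripke structure: its elements
are paths from `a` of length ≤ k, `R_α(s, t)` holds iff `t = s[α, a']` for some `a'`,
and unary relations are inherited along last elements. -/
def unravel {Λ P : Type} (k : ℕ) (M : Kripke Λ P) (a : M.carrier) : Kripke Λ P where
  carrier := MPath M a k
  trans l s t := ∃ a' : M.carrier, t.1 = s.1 ++ [(l, a')]
  props p s := M.props p (lastM s)

/-- Homomorphisms of Kripke structures. -/
def IsKHom {Λ P : Type} (M N : Kripke Λ P) (f : M.carrier → N.carrier) : Prop :=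
  (∀ l x y, M.trans l x y → N.trans l (f x) (f y)) ∧
  (∀ p x, M.props p x → N.props p (f x))

/-- Paths are closed under prefixes. -/
theorem IsPath.take {Λ P : Type} {M : Kripke Λ P} {a : M.carrier}
    {s : List (Λ × M.carrier)} (hs : IsPath M a s) (n : ℕ) : IsPath M a (s.take n) := by
  intro i h
  have hn : i < n := by simpa using lt_of_lt_of_le h (by simp [List.length_take])
  have hlen : i < s.length := lt_of_lt_of_le h (by
    simpa using List.length_take_le n s)
  have key := hs i hlen
  have e1 : (s.take n).get ⟨i, h⟩ = s.get ⟨i, hlen⟩ := by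
    simp [List.get_eq_getElem, List.getElem_take]
  have e2 : (s.take n).take i = s.take i := by
    rw [List.take_take, Nat.min_eq_left (le_of_lt hn)]
  rw [e1, e2]
  exact key

/-- The raw coextension of `f` along the unravelling comonad: the `i`-th entry of
`f* s` is `(αᵢ, f(prefix of s of length i))`. -/
def coextRaw {Λ P : Type} {M : Kripke Λ P} {a : M.carrier} {k : ℕ} {β : Type}
    (f : MPath M a k → β) (s : MPath M a k) : List (Λ × β) :=
  (List.finRange s.1.length).map fun i =>
    ((s.1.get i).1,
      f ⟨s.1.take (i.1 + 1),
        ⟨le_trans (by simpa using List.length_take_le (i.1 + 1) s.1) s.2.1,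
         s.2.2.take (i.1 + 1)⟩⟩)

/-! The coextension `f*` relabels the vertices of a path by the values of `f` on the prefixes
ending there. Everything rests on the fact that coextension commutes with taking prefixes,
`f* (s ↾ n) = (f* s) ↾ n`: consecutive prefixes of `s` are `R_α`-related in the unravelling, so a
homomorphism `f` turns `f* s` into a path; and `g* ∘ f*` evaluates `g` on the prefixes of `f* s`,
which are the `f*` of the prefixes of `s`, exactly as `(g ∘ f*)*` does. -/

namespace MPath

variable {Λ P : Type} {M : Kripke Λ P} {a : M.carrier} {k : ℕ}

def take (s : MPath M a k) (n : ℕ) : MPath M a k :=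
  ⟨s.1.take n, (List.length_take_le' n s.1).trans s.2.1, s.2.2.take n⟩

@[simp]
theorem take_val (s : MPath M a k) (n : ℕ) : (s.take n).1 = s.1.take n := rfl

@[simp]
theorem take_length (s : MPath M a k) : s.take s.1.length = s :=
  Subtype.ext (List.take_length ..)

@[simp]
theorem take_take (s : MPath M a k) (m n : ℕ) : (s.take n).take m = s.take (min m n) :=
  Subtype.ext (List.take_take ..)

theorem lastM_take_succ (s : MPath M a k) {i : ℕ} (hi : i < s.1.length) :
    lastM (s.take (i + 1)) = s.1[i].2 := by
  unfold lastM
  rw [take_val, List.getLast?_take, if_neg i.succ_ne_zero, Nat.add_sub_cancel,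
    List.getElem?_eq_getElem hi]
  rfl

theorem unravel_trans_take_succ (s : MPath M a k) {i : ℕ} (hi : i < s.1.length) :
    (unravel k M a).trans s.1[i].1 (s.take i) (s.take (i + 1)) :=
  ⟨s.1[i].2, by rw [take_val, take_val, List.take_add_one, List.getElem?_eq_getElem hi]; rfl⟩

end MPath

section Unravel

variable {Λ P : Type} {M : Kripke Λ P} {a : M.carrier} {k : ℕ}

theorem IsPath.trans_of_append {s : List (Λ × M.carrier)} {l : Λ} {x : M.carrier}
    (h : IsPath M a (s ++ [(l, x)])) : M.trans l (s.getLast?.elim a Prod.snd) x := by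
  simpa using h s.length (by simp)

theorem isKHom_lastM : IsKHom (unravel k M a) M lastM := by
  refine ⟨?_, fun _ _ hp => hp⟩
  rintro l s t ⟨x, ht⟩
  have hlast : lastM t = x := by simp [lastM, ht]
  rw [hlast]
  exact (ht ▸ t.2.2 : IsPath M a (s.1 ++ [(l, x)])).trans_of_append

variable {β : Type}

@[simp]
theorem coextRaw_length (f : MPath M a k → β) (s : MPath M a k) :
    (coextRaw f s).length = s.1.length := by
  simp [coextRaw]

@[simp]
theorem coextRaw_getElem (f : MPath M a k → β) (s : MPath M a k) (i : ℕ)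
    (h : i < (coextRaw f s).length) :
    (coextRaw f s)[i] = ((s.1[i]'(by simpa using h)).1, f (s.take (i + 1))) := by
  simp [coextRaw, MPath.take]

theorem coextRaw_take (f : MPath M a k → β) (s : MPath M a k) (n : ℕ) :
    coextRaw f (s.take n) = (coextRaw f s).take n :=
  List.ext_getElem (by simp) fun i h _ => by
    simp [Nat.min_eq_left (by simp at h; omega : i + 1 ≤ n)]

theorem coextRaw_nilPath (f : MPath M a k → β) : coextRaw f (nilPath M a k) = [] := by
  simp [coextRaw, nilPath]

theorem coextRaw_lastM (s : MPath M a k) : coextRaw lastM s = s.1 :=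
  List.ext_getElem (by simp) fun i h _ => by
    simp [MPath.lastM_take_succ s (by simpa using h)]

theorem elim_getLast?_coextRaw (b : β) {f : MPath M a k → β}
    (hf₀ : f (nilPath M a k) = b) (s : MPath M a k) :
    (coextRaw f s).getLast?.elim b Prod.snd = f s := by
  cases hn : s.1.length with
  | zero =>
    obtain rfl : s = nilPath M a k := Subtype.ext (List.eq_nil_of_length_eq_zero hn)
    simp [coextRaw_nilPath, hf₀]
  | succ n =>
    have hs : s.take (n + 1) = s := hn ▸ s.take_length
    simp [List.getLast?_eq_getElem?, hn, hs]

theorem coextRaw_comp {N : Kripke Λ P} {b : N.carrier} {f : MPath M a k → N.carrier}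
    {star : MPath M a k → MPath N b k} (hstar : ∀ s, (star s).1 = coextRaw f s)
    (g : MPath N b k → β) (s : MPath M a k) :
    coextRaw (fun u => g (star u)) s = coextRaw g (star s) := by
  have htake : ∀ n, star (s.take n) = (star s).take n := fun n =>
    Subtype.ext (by simp [hstar, coextRaw_take])
  refine List.ext_getElem (by simp [hstar]) fun i _ _ => ?_
  simp [htake, List.getElem_of_eq (hstar s)]

theorem coextRaw_append {f : MPath M a k → β} {s t : MPath M a k} {l : Λ} {x : M.carrier}
    (ht : t.1 = s.1 ++ [(l, x)]) : coextRaw f t = coextRaw f s ++ [(l, f t)] := by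
  have hs : t.take s.1.length = s := Subtype.ext (by simp [ht])
  have hlen : t.1.length = s.1.length + 1 := by simp [ht]
  have ht' : t.take (s.1.length + 1) = t := hlen ▸ t.take_length
  rw [← List.take_length (l := coextRaw f t), coextRaw_length, hlen, List.take_add_one,
    ← coextRaw_take, hs, List.getElem?_eq_getElem (by simp [hlen]), coextRaw_getElem]
  simp only [List.getElem_of_eq ht, List.getElem_concat_length, ht', Option.toList_some]

variable {N : Kripke Λ P} {b : N.carrier} {f : MPath M a k → N.carrier}

theorem isPath_coextRaw (hf : ∀ l x y, (unravel k M a).trans l x y → N.trans l (f x) (f y))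
    (hf₀ : f (nilPath M a k) = b) (s : MPath M a k) : IsPath N b (coextRaw f s) := by
  intro i h
  have hi : i < s.1.length := by simpa using h
  rw [List.get_eq_getElem, coextRaw_getElem, ← coextRaw_take, elim_getLast?_coextRaw b hf₀]
  exact hf _ _ _ (s.unravel_trans_take_succ hi)

def coext (f : MPath M a k → N.carrier)
    (hf : ∀ l x y, (unravel k M a).trans l x y → N.trans l (f x) (f y))
    (hf₀ : f (nilPath M a k) = b) (s : MPath M a k) : MPath N b k :=
  ⟨coextRaw f s, by simpa using s.2.1, isPath_coextRaw hf hf₀ s⟩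

variable (hf : ∀ l x y, (unravel k M a).trans l x y → N.trans l (f x) (f y))
  (hf₀ : f (nilPath M a k) = b)

theorem lastM_coext (s : MPath M a k) : lastM (coext f hf hf₀ s) = f s :=
  elim_getLast?_coextRaw b hf₀ s

theorem coext_nilPath : coext f hf hf₀ (nilPath M a k) = nilPath N b k :=
  Subtype.ext (coextRaw_nilPath f)

theorem isKHom_coext (hprops : ∀ p x, (unravel k M a).props p x → N.props p (f x)) :
    IsKHom (unravel k M a) (unravel k N b) (coext f hf hf₀) := by
  refine ⟨fun l s t ⟨x, ht⟩ => ⟨f t, coextRaw_append ht⟩, fun p (s : MPath M a k) hp => ?_⟩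
  change N.props p (lastM (coext f hf hf₀ s))
  rw [lastM_coext]
  exact hprops p s hp

end Unravel

theorem unravel_is_comonad_general {Λ P : Type} (k : ℕ)
    (M : Kripke Λ P) (a : M.carrier) :
    -- the counit is a pointed homomorphism
    (IsKHom (unravel k M a) M lastM ∧ lastM (nilPath M a k) = a) ∧
    -- coextension of a pointed homomorphism is a pointed homomorphism into the
    -- unravelling of the codomain, and the right counit law `ε ∘ f* = f` holds
    (∀ (N : Kripke Λ P) (b : N.carrier) (f : MPath M a k → N.carrier),
      IsKHom (unravel k M a) N f → f (nilPath M a k) = b →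
      ∃ star : MPath M a k → MPath N b k,
        (∀ s, (star s).1 = coextRaw f s) ∧
        IsKHom (unravel k M a) (unravel k N b) star ∧
        star (nilPath M a k) = nilPath N b k ∧
        (∀ s, lastM (star s) = f s)) ∧
    -- the left counit law `ε* = id`
    (∀ s : MPath M a k, coextRaw (lastM : MPath M a k → M.carrier) s = s.1) ∧
    -- coassociativity `(g ∘ f*)* = g* ∘ f*`
    (∀ (N N' : Kripke Λ P) (b : N.carrier)
        (f : MPath M a k → N.carrier) (g : MPath N b k → N'.carrier),
      IsKHom (unravel k M a) N f → IsKHom (unravel k N b) N' g →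
      ∀ star : MPath M a k → MPath N b k, (∀ s, (star s).1 = coextRaw f s) →
      ∀ s : MPath M a k, coextRaw (fun u => g (star u)) s = coextRaw g (star s)) := by
  refine ⟨⟨isKHom_lastM, rfl⟩, ?_, coextRaw_lastM, ?_⟩
  · intro N b f hf hf₀
    exact ⟨coext f hf.1 hf₀, fun _ => rfl, isKHom_coext hf.1 hf₀ hf.2, coext_nilPath hf.1 hf₀,
      lastM_coext hf.1 hf₀⟩
  · intro N N' b f g _ _ star hstar s
    exact coextRaw_comp hstar g s

/-- for `k > 0`, the `k`-step unravelling `M_k` is a comonad on pointed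
Kripke structures: the counit (taking last elements) is a pointed homomorphism
`M_k(M,a) → (M,a)`; for every pointed homomorphism `f : M_k(M,a) → (N,b)` the
coextension `f*` is a pointed homomorphism `M_k(M,a) → M_k(N,b)` (in particular
`f* s` is a path from `b` in `N` of length ≤ k); and the co-Kleisli comonad laws
`ε* = id`, `ε ∘ f* = f` and `(g ∘ f*)* = g* ∘ f*` hold. -/
theorem unravel_is_comonad {Λ P : Type} (k : ℕ) (hk : 0 < k)
    (M : Kripke Λ P) (a : M.carrier) :
    -- the counit is a pointed homomorphism
    (IsKHom (unravel k M a) M lastM ∧ lastM (nilPath M a k) = a) ∧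
    -- coextension of a pointed homomorphism is a pointed homomorphism into the
    -- unravelling of the codomain, and the right counit law `ε ∘ f* = f` holds
    (∀ (N : Kripke Λ P) (b : N.carrier) (f : MPath M a k → N.carrier),
      IsKHom (unravel k M a) N f → f (nilPath M a k) = b →
      ∃ star : MPath M a k → MPath N b k,
        (∀ s, (star s).1 = coextRaw f s) ∧
        IsKHom (unravel k M a) (unravel k N b) star ∧
        star (nilPath M a k) = nilPath N b k ∧
        (∀ s, lastM (star s) = f s)) ∧
    -- the left counit law `ε* = id`
    (∀ s : MPath M a k, coextRaw (lastM : MPath M a k → M.carrier) s = s.1) ∧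
    -- coassociativity `(g ∘ f*)* = g* ∘ f*`
    (∀ (N N' : Kripke Λ P) (b : N.carrier)
        (f : MPath M a k → N.carrier) (g : MPath N b k → N'.carrier),
      IsKHom (unravel k M a) N f → IsKHom (unravel k N b) N' g →
      ∀ star : MPath M a k → MPath N b k, (∀ s, (star s).1 = coextRaw f s) →
      ∀ s : MPath M a k, coextRaw (fun u => g (star u)) s = coextRaw g (star s)) :=
  unravel_is_comonad_general k M a
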